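/- arXiv:1907.13217 — 2 statements merged into one kernel-verified Lean document; each statement's English description precedes it below -/
import Mathlib

section
/- Let $\mathcal{C}_{\le d}$ be the squarefree evaluation code of degree $d$ on the affine torus $T = (\mathbb{F}_q^*)^s$, with $1 \le d \le s$. If $q \ge 3$, then the minimum distance of $\mathcal{C}_{\le d}$ is $(q-2)^{d}(q-1)^{s-d}$. -/
open MvPolynomial
open scoped MonomialOrder

variable {K : Type*} [Field K] {s : ℕ}

/-- The exponent of the initial (leading) monomial of `f` with respect to the
monomial order `m` (it is `0` for `f = 0`). -/
noncomputable def leadExp (m : MonomialOrder (Fin s)) (f : MvPolynomial (Fin s) K) :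
    Fin s →₀ ℕ :=
  m.toSyn.symm (f.support.sup fun a => m.toSyn a)

/-- The coefficient of the initial monomial of `f`; `f` is monic when this is `1`. -/
noncomputable def leadCoeff (m : MonomialOrder (Fin s)) (f : MvPolynomial (Fin s) K) : K :=
  f.coeff (leadExp m f)

/-- The initial monomial `in_≺(f)` of `f`, as a (monic) monomial of the polynomial ring. -/
noncomputable def leadMon (m : MonomialOrder (Fin s)) (f : MvPolynomial (Fin s) K) :
    MvPolynomial (Fin s) K :=
  monomial (leadExp m f) (1 : K)

/-- The initial ideal `in_≺(I)` of an ideal `I`: the ideal generated by the initial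
monomials of the nonzero elements of `I`. -/
noncomputable def initialIdeal (m : MonomialOrder (Fin s)) (I : Ideal (MvPolynomial (Fin s) K)) :
    Ideal (MvPolynomial (Fin s) K) :=
  Ideal.span { g | ∃ f ∈ I, f ≠ 0 ∧ g = leadMon m f }

/-- The footprint `Δ_≺(I)` of `S/I`: the set of standard monomials, i.e. the (monic)
monomials that do not belong to the initial ideal of `I`. -/
noncomputable def stdMonomials (m : MonomialOrder (Fin s)) (I : Ideal (MvPolynomial (Fin s) K)) :
    Set (MvPolynomial (Fin s) K) :=
  { g | (∃ a : Fin s →₀ ℕ, g = monomial a (1 : K)) ∧ g ∉ initialIdeal m I }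

/-- `KΔ_≺(I)`, the `K`-linear span of the standard monomials of `S/I`. -/
noncomputable def stdSpan (m : MonomialOrder (Fin s)) (I : Ideal (MvPolynomial (Fin s) K)) :
    Submodule K (MvPolynomial (Fin s) K) :=
  Submodule.span K (stdMonomials m I)

/-- A monomial order is graded if monomials are first compared by their total degrees. -/
def IsGradedOrder (m : MonomialOrder (Fin s)) : Prop :=
  ∀ a b : Fin s →₀ ℕ, a.degree < b.degree → a ≺[m] b

/-- The vanishing ideal `I(X)` of a set of points `X ⊆ 𝔸^s = K^s`. -/
def affVanishingIdeal (X : Set (Fin s → K)) : Ideal (MvPolynomial (Fin s) K) where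
  carrier := { f | ∀ x ∈ X, eval x f = 0 }
  add_mem' := by
    intro a b ha hb x hx
    simp [ha x hx, hb x hx]
  zero_mem' := by intro x hx; simp
  smul_mem' := by
    intro c f hf x hx
    simp [smul_eq_mul, hf x hx]

/-- The evaluation map `S → K^X`, `f ↦ (f(P₁),…,f(P_m))`, at the points of a finite
set `X` of points of `𝔸^s`. -/
noncomputable def evalMap (X : Finset (Fin s → K)) :
    MvPolynomial (Fin s) K →ₗ[K] (X → K) where
  toFun f := fun x => eval (x : Fin s → K) f
  map_add' f g := by funext x; simp
  map_smul' c f := by funext x; simp [Algebra.smul_def]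

/-- The degree `deg(S/I)`.  For the ideals considered in this paper `S/I` is a
zero-dimensional ring, and its degree (the normalized leading coefficient of the
affine Hilbert polynomial) equals `dim_K (S/I)` (and is `0` when `I = S`). -/
noncomputable def adeg (I : Ideal (MvPolynomial (Fin s) K)) : ℕ :=
  Module.finrank K (MvPolynomial (Fin s) K ⧸ I)

/-- The affine Hilbert function `H_I^a(d) = dim_K (S_{≤d}/I_{≤d})`, computed as the
dimension of the image of `S_{≤d}` in `S/I`. -/
noncomputable def affineHilbert (I : Ideal (MvPolynomial (Fin s) K)) (d : ℕ) : ℕ :=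
  Module.finrank K
    ((restrictTotalDegree (Fin s) K d).map (Submodule.restrictScalars K I).mkQ)

/-- The support `χ(D)` of a subcode `D ⊆ K^ι`. -/
def codeSupport {ι : Type*} (D : Submodule K (ι → K)) : Set ι :=
  { i | ∃ v ∈ D, v i ≠ 0 }

/-- The `r`-th generalized Hamming weight of a linear code `C ⊆ K^ι`: the minimum
size of the support of an `r`-dimensional subcode. -/
noncomputable def ghw {ι : Type*} (C : Submodule K (ι → K)) (r : ℕ) : ℕ :=
  sInf { n | ∃ D : Submodule K (ι → K),
    D ≤ C ∧ Module.finrank K (↥D) = r ∧ (codeSupport D).ncard = n }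

/-- The minimum distance of a linear code: the least Hamming weight of a nonzero
codeword. -/
noncomputable def minDist {ι : Type*} (C : Submodule K (ι → K)) : ℕ :=
  sInf { n | ∃ v ∈ C, v ≠ 0 ∧ ({ i : ι | v i ≠ 0 }).ncard = n }

/-- The affine torus `T = (K^*)^s`. -/
noncomputable def torus (K : Type*) [Field K] [Fintype K] (s : ℕ) : Finset (Fin s → K) :=
  letI := Classical.decEq K
  Finset.univ.filter fun x => ∀ i, x i ≠ 0

/-- `V_d`: the set of squarefree (monic) monomials of degree `d`. -/
def sqfreeMonomials (K : Type*) [Field K] (s d : ℕ) : Set (MvPolynomial (Fin s) K) :=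
  { g | ∃ a : Fin s →₀ ℕ, (∀ i, a i ≤ 1) ∧ a.degree = d ∧ g = monomial a (1 : K) }

/-- `V_{≤d}`: the set of squarefree (monic) monomials of degree at most `d`. -/
def sqfreeMonomialsLe (K : Type*) [Field K] (s d : ℕ) : Set (MvPolynomial (Fin s) K) :=
  { g | ∃ a : Fin s →₀ ℕ, (∀ i, a i ≤ 1) ∧ a.degree ≤ d ∧ g = monomial a (1 : K) }

/-!
Over the torus, a squarefree polynomial `f = h + t₀ g` (with `h, g` free of `t₀`) restricts,
for each of the `q - 1` values `a ≠ 0` of `t₀`, to `h + a g` in one variable fewer. If no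
slice vanishes, each slice has degree at most `d`; otherwise `h = -a₀ g` for one `a₀`, and the
remaining `q - 2` slices are the nonzero multiples `(a - a₀) g` of `g`, of degree at most `d - 1`.
Induction on the number of variables gives at least `(q - 2)^d (q - 1)^(s - d)` nonzero values,
and `∏_{i ≤ d} (t_i - 1)` attains this bound.
-/

open Finset

theorem Finsupp.degree_cons (i : ℕ) (m : Fin s →₀ ℕ) : (m.cons i).degree = i + m.degree := by
  simp [Finsupp.degree_eq_sum, Fin.sum_univ_succ]

theorem Finset.card_filter_piFinset_succ {n : ℕ} {α : Fin (n + 1) → Type*}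
    (S : ∀ i, Finset (α i)) (P : (∀ i, α i) → Prop) [DecidablePred P] :
    #{x ∈ Fintype.piFinset S | P x} =
      ∑ a ∈ S 0, #{y ∈ Fintype.piFinset (Fin.tail S) | P (Fin.cons a y)} := by
  have h := filter_piFinset_eq_map_consEquiv S (fun _ => True)
  simp only [filter_true] at h
  rw [h, filter_map, card_map, card_filter, sum_product]
  refine sum_congr rfl fun a _ => ?_
  rw [card_filter]
  rfl

def sqfreeExponentsLe (s d : ℕ) : Set (Fin s →₀ ℕ) := {a | (∀ i, a i ≤ 1) ∧ a.degree ≤ d}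

theorem span_sqfreeMonomialsLe (d : ℕ) :
    Submodule.span K (sqfreeMonomialsLe K s d) = restrictSupport K (sqfreeExponentsLe s d) := by
  rw [restrictSupport_eq_span]
  congr 1
  ext g
  simp [sqfreeMonomialsLe, sqfreeExponentsLe, eq_comm, and_assoc]

section CommSemiring

variable {R : Type*} [CommSemiring R]

theorem prod_X_mem_restrictSupport {u : Finset (Fin s)} {d : ℕ} (hu : #u ≤ d) :
    ∏ i ∈ u, (X i : MvPolynomial (Fin s) R) ∈ restrictSupport R (sqfreeExponentsLe s d) := by
  rw [show ∏ i ∈ u, (X i : MvPolynomial (Fin s) R) = ∏ i ∈ u, monomial (Finsupp.single i 1) 1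
    from rfl, ← monomial_sum_one, monomial_mem_restrictSupport]
  left
  refine ⟨fun j => ?_, by simpa [map_sum] using hu⟩
  rw [Finsupp.finsetSum_apply]
  simp only [Finsupp.single_apply]
  rw [sum_ite_eq']
  split <;> omega

theorem natDegree_finSuccEquiv_le_one {f : MvPolynomial (Fin (s + 1)) R} {d : ℕ}
    (hf : f ∈ restrictSupport R (sqfreeExponentsLe (s + 1) d)) :
    (finSuccEquiv R s f).natDegree ≤ 1 := by
  rw [natDegree_finSuccEquiv, degreeOf_le_iff]
  exact fun m hm => (hf hm).1 0

theorem coeff_finSuccEquiv_mem_restrictSupport {f : MvPolynomial (Fin (s + 1)) R} {d : ℕ}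
    (hf : f ∈ restrictSupport R (sqfreeExponentsLe (s + 1) d)) (i : ℕ) :
    (finSuccEquiv R s f).coeff i ∈
      restrictSupport R {m | (∀ j, m j ≤ 1) ∧ i + m.degree ≤ d} := by
  intro m hm
  have hcons : m.cons i ∈ f.support := by
    rw [mem_support_iff, ← finSuccEquiv_coeff_coeff]
    exact mem_support_iff.mp hm
  obtain ⟨hle, hdeg⟩ := hf hcons
  exact ⟨fun j => by simpa using hle j.succ, by simpa [Finsupp.degree_cons] using hdeg⟩

theorem eval_cons_of_natDegree_finSuccEquiv_le_one {f : MvPolynomial (Fin (s + 1)) R}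
    (hf : (finSuccEquiv R s f).natDegree ≤ 1) (a : R) (y : Fin s → R) :
    eval (Fin.cons a y) f =
      eval y ((finSuccEquiv R s f).coeff 0 + C a * (finSuccEquiv R s f).coeff 1) := by
  rw [eval_eq_eval_mv_eval']
  conv_lhs => rw [Polynomial.eq_X_add_C_of_natDegree_le_one hf]
  simp only [Polynomial.map_add, Polynomial.map_mul, Polynomial.map_C, Polynomial.map_X,
    Polynomial.eval_add, Polynomial.eval_mul, Polynomial.eval_C, Polynomial.eval_X, map_add,
    map_mul, eval_C]
  ring

theorem coeff_finSuccEquiv_ne_zero_of_natDegree_le_one {f : MvPolynomial (Fin (s + 1)) R}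
    (hf : (finSuccEquiv R s f).natDegree ≤ 1) (hf0 : f ≠ 0) :
    (finSuccEquiv R s f).coeff 0 ≠ 0 ∨ (finSuccEquiv R s f).coeff 1 ≠ 0 := by
  by_contra! h
  apply hf0
  have := Polynomial.eq_X_add_C_of_natDegree_le_one hf
  rw [h.1, h.2] at this
  simpa using this

end CommSemiring

theorem prod_X_sub_one_mem_restrictSupport {R : Type*} [CommRing R] (A : Finset (Fin s)) :
    ∏ i ∈ A, (X i - 1 : MvPolynomial (Fin s) R) ∈ restrictSupport R (sqfreeExponentsLe s #A) := by
  rw [prod_sub]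
  refine sum_mem fun t _ => ?_
  rw [prod_const_one, mul_one, show ((-1) ^ #t : MvPolynomial (Fin s) R) = C ((-1) ^ #t) by simp,
    ← smul_eq_C_mul]
  exact Submodule.smul_mem _ _ (prod_X_mem_restrictSupport (card_le_card sdiff_subset))

/-- `min d s` appears because a squarefree monomial in `s` variables has degree at most `s`. -/
def sqfreeBound (q s d : ℕ) : ℕ := (q - 2) ^ min d s * (q - 1) ^ (s - min d s)

theorem sqfreeBound_zero (q d : ℕ) : sqfreeBound q 0 d = 1 := by
  simp [sqfreeBound]

theorem sqfreeBound_of_le {q s d : ℕ} (h : d ≤ s) :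
    sqfreeBound q s d = (q - 2) ^ d * (q - 1) ^ (s - d) := by
  rw [sqfreeBound, min_eq_left h]

theorem sqfreeBound_succ_le (q s d : ℕ) :
    sqfreeBound q (s + 1) d ≤ (q - 1) * sqfreeBound q s d := by
  rcases le_or_gt d s with hds | hsd
  · rw [sqfreeBound_of_le hds, sqfreeBound_of_le (by omega), Nat.sub_add_comm hds, pow_succ]
    exact le_of_eq (by ring)
  · rw [sqfreeBound, sqfreeBound, min_eq_right hsd, min_eq_right hsd.le, Nat.sub_self,
      Nat.sub_self, pow_zero, mul_one, mul_one, pow_succ, mul_comm (q - 1)]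
    exact Nat.mul_le_mul_left _ (by omega)

theorem sqfreeBound_succ_succ (q s d : ℕ) :
    sqfreeBound q (s + 1) (d + 1) = (q - 2) * sqfreeBound q s d := by
  rw [sqfreeBound, sqfreeBound, Nat.add_min_add_right, Nat.add_sub_add_right, pow_succ]
  ring

theorem ncard_evalMap_ne_zero [DecidableEq K] (X : Finset (Fin s → K))
    (f : MvPolynomial (Fin s) K) :
    {i : X | evalMap X f i ≠ 0}.ncard = #{x ∈ X | eval x f ≠ 0} := by
  change {i : X | (i : Fin s → K) ∈ {x | eval x f ≠ 0}}.ncard = _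
  rw [Set.ncard_subtype, ← Set.ncard_coe_finset, coe_filter]
  congr 1
  ext x
  simp [and_comm]

section Torus

variable [Fintype K] [DecidableEq K]

theorem torus_eq_piFinset : torus K s = Fintype.piFinset fun _ => ({0}ᶜ : Finset K) := by
  ext x
  simp [torus]

noncomputable def torusWeight (f : MvPolynomial (Fin s) K) : ℕ := #{x ∈ torus K s | eval x f ≠ 0}

theorem torusWeight_eq_sum (f : MvPolynomial (Fin (s + 1)) K) (F : K → MvPolynomial (Fin s) K)
    (hF : ∀ a y, eval (Fin.cons a y) f = eval y (F a)) :
    torusWeight f = ∑ a ∈ {0}ᶜ, torusWeight (F a) := by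
  simp only [torusWeight, torus_eq_piFinset, card_filter_piFinset_succ, hF]
  rfl

theorem torusWeight_C_mul {c : K} (hc : c ≠ 0) (f : MvPolynomial (Fin s) K) :
    torusWeight (C c * f) = torusWeight f := by
  simp [torusWeight, hc]

theorem torusWeight_prod_X_sub_one (A : Finset (Fin s)) :
    torusWeight (∏ i ∈ A, (X i - 1 : MvPolynomial (Fin s) K)) =
      (Fintype.card K - 2) ^ #A * (Fintype.card K - 1) ^ (s - #A) := by
  have hnonzero : {x ∈ torus K s | eval x (∏ i ∈ A, (X i - 1)) ≠ 0} =
      Fintype.piFinset fun i => if i ∈ A then ({0, 1}ᶜ : Finset K) else {0}ᶜ := by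
    ext x
    simp only [torus_eq_piFinset, mem_filter, Fintype.mem_piFinset, map_prod, map_sub, eval_X,
      map_one, prod_ne_zero_iff, sub_ne_zero]
    rw [← forall_and]
    refine forall_congr' fun i => ?_
    split_ifs with hi <;> simp [hi]
  simp only [torusWeight, hnonzero, Fintype.card_piFinset, apply_ite card, prod_ite, prod_const,
    card_compl, card_pair zero_ne_one, card_singleton, filter_not, filter_mem_eq_inter, univ_inter,
    card_sdiff_of_subset (subset_univ A), card_univ, Fintype.card_fin]

theorem sum_torusWeight_of_add_C_mul_eq_zero {h g : MvPolynomial (Fin s) K} {a₀ : K}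
    (ha₀ : a₀ ≠ 0) (hzero : h + C a₀ * g = 0) :
    ∑ a ∈ ({0}ᶜ : Finset K), torusWeight (h + C a * g) = (Fintype.card K - 2) * torusWeight g := by
  have hslice (a : K) : h + C a * g = C (a - a₀) * g := by
    rw [eq_neg_of_add_eq_zero_left hzero, map_sub]
    ring
  rw [← sum_erase (f := fun a => torusWeight (h + C a * g)) (a := a₀) _
      (by simp [hzero, torusWeight]),
    sum_congr rfl fun a ha => by
      rw [hslice, torusWeight_C_mul (sub_ne_zero.mpr (ne_of_mem_erase ha))],
    sum_const, card_erase_of_mem (by simpa using ha₀), card_compl, card_singleton, smul_eq_mul,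
    Nat.sub_sub]

theorem sqfreeBound_le_torusWeight :
    ∀ {s d : ℕ} {f : MvPolynomial (Fin s) K}, f ∈ restrictSupport K (sqfreeExponentsLe s d) →
      f ≠ 0 → sqfreeBound (Fintype.card K) s d ≤ torusWeight f
  | 0, d, f, _, hf0 => by
    rw [sqfreeBound_zero, Nat.one_le_iff_ne_zero, torusWeight, Ne, card_eq_zero,
      filter_eq_empty_iff]
    rw [f.eq_C_of_isEmpty] at hf0 ⊢
    simpa [torus] using hf0
  | s + 1, d, f, hf, hf0 => by
    have hdeg := natDegree_finSuccEquiv_le_one hf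
    set h := (finSuccEquiv K s f).coeff 0
    set g := (finSuccEquiv K s f).coeff 1
    have hh : h ∈ restrictSupport K (sqfreeExponentsLe s d) := by
      simpa [sqfreeExponentsLe] using coeff_finSuccEquiv_mem_restrictSupport hf 0
    have hg := coeff_finSuccEquiv_mem_restrictSupport hf 1
    rw [torusWeight_eq_sum f _ (eval_cons_of_natDegree_finSuccEquiv_le_one hdeg)]
    by_cases hslices : ∃ a₀ ≠ (0 : K), h + C a₀ * g = 0
    · obtain ⟨a₀, ha₀, hzero⟩ := hslices
      have hg0 : g ≠ 0 := by
        rintro hg0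
        rw [hg0, mul_zero, add_zero] at hzero
        exact (coeff_finSuccEquiv_ne_zero_of_natDegree_le_one hdeg hf0).elim (· hzero) (· hg0)
      -- a monomial `m` of `g` gives the monomial `t₀ m` of `f`, so `d ≥ 1`
      obtain ⟨m, hm⟩ := support_nonempty.mpr hg0
      obtain ⟨e, rfl⟩ : ∃ e, d = e + 1 := Nat.exists_eq_add_of_le' (le_of_add_le_left (hg hm).2)
      have hg' : g ∈ restrictSupport K (sqfreeExponentsLe s e) := by
        refine restrictSupport_mono K ?_ hg
        exact fun n hn => ⟨hn.1, by have := hn.2; omega⟩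
      rw [sum_torusWeight_of_add_C_mul_eq_zero ha₀ hzero, sqfreeBound_succ_succ]
      exact Nat.mul_le_mul_left _ (sqfreeBound_le_torusWeight hg' hg0)
    · have hslice_mem (a : K) : h + C a * g ∈ restrictSupport K (sqfreeExponentsLe s d) := by
        rw [← smul_eq_C_mul]
        refine add_mem hh (Submodule.smul_mem _ a (restrictSupport_mono K ?_ hg))
        exact fun m hm => ⟨hm.1, le_of_add_le_right hm.2⟩
      calc sqfreeBound (Fintype.card K) (s + 1) d
          ≤ #({0}ᶜ : Finset K) • sqfreeBound (Fintype.card K) s d := by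
            rw [card_compl, card_singleton]
            exact sqfreeBound_succ_le ..
        _ ≤ ∑ a ∈ ({0}ᶜ : Finset K), torusWeight (h + C a * g) :=
          card_nsmul_le_sum _ _ _ fun a ha =>
            sqfreeBound_le_torusWeight (hslice_mem a) fun h0 => hslices ⟨a, by simpa using ha, h0⟩

end Torus

theorem minDist_squarefree_evaluation_code_general (K : Type*) [Field K] [Fintype K] (s d : ℕ)
    (hds : d ≤ s) (hq : 3 ≤ Fintype.card K) :
    minDist ((Submodule.span K (sqfreeMonomialsLe K s d)).map (evalMap (torus K s))) =
      (Fintype.card K - 2) ^ d * (Fintype.card K - 1) ^ (s - d) := by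
  classical
  obtain ⟨A, -, rfl⟩ := exists_subset_card_eq (show d ≤ #(univ : Finset (Fin s)) by simpa)
  set p : MvPolynomial (Fin s) K := ∏ i ∈ A, (X i - 1)
  have hweight : {i | evalMap (torus K s) p i ≠ 0}.ncard =
      (Fintype.card K - 2) ^ #A * (Fintype.card K - 1) ^ (s - #A) := by
    rw [ncard_evalMap_ne_zero]
    exact torusWeight_prod_X_sub_one A
  have hpos : 0 < (Fintype.card K - 2) ^ #A * (Fintype.card K - 1) ^ (s - #A) :=
    Nat.mul_pos (pow_pos (by omega) _) (pow_pos (by omega) _)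
  rw [span_sqfreeMonomialsLe]
  refine IsLeast.csInf_eq ⟨⟨_, Submodule.mem_map_of_mem
    (prod_X_sub_one_mem_restrictSupport A), fun h0 => ?_, hweight⟩, ?_⟩
  · rw [h0] at hweight
    simp only [Pi.zero_apply, ne_eq, not_true_eq_false, Set.ofPred_false, Set.ncard_empty] at hweight
    exact hpos.ne hweight
  · rintro _ ⟨_, ⟨f, hf, rfl⟩, hf0, rfl⟩
    rw [ncard_evalMap_ne_zero, ← sqfreeBound_of_le hds]
    exact sqfreeBound_le_torusWeight hf (by rintro rfl; exact hf0 (map_zero _))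

/-- Theorem (minimum distance of the squarefree evaluation code `𝓒_{≤ d}`). -/
theorem minDist_squarefree_evaluation_code (K : Type*) [Field K] [Fintype K] (s d : ℕ)
    (hd1 : 1 ≤ d) (hds : d ≤ s) (hq : 3 ≤ Fintype.card K) :
    minDist ((Submodule.span K (sqfreeMonomialsLe K s d)).map (evalMap (torus K s))) =
      (Fintype.card K - 2) ^ d * (Fintype.card K - 1) ^ (s - d) :=
  minDist_squarefree_evaluation_code_general K s d hds hq
end

section
/- Let $X$ be a finite subset of an affine space $\mathbb{A}^s = K^s$ over a field $K$, let $\prec$ be a monomial order on $S = K[t_1,\ldots,t_s]$, and let $F = \{f_1,\ldots,f_r\}$ be a set of polynomials of $S$. Then $|V_X(F)| = \deg(S/(I(X),F)) = \dim_K(S/(I(X),F)) = |\Delta_\prec(I(X),F)|$. -/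
open MvPolynomial
open scoped MonomialOrder

variable {K : Type*} [Field K] {s : ℕ}

/-- `V_X(F)`: the affine variety of `F` in `X`. -/
def VX (X : Finset (Fin s → K)) (F : Finset (MvPolynomial (Fin s) K)) : Set (Fin s → K) :=
  { x | x ∈ X ∧ ∀ f ∈ F, eval x f = 0 }

/-!
Interpolation polynomials make evaluation `S → K^X` onto, with kernel `I(X)`, so
`dim_K S/I(Y) = |Y|` for every finite `Y`. Modulo `I(X)` the indicator polynomial of a point
of `X \ V_X(F)` is a multiple of some `f ∈ F`, whence `(I(X),F) = I(V_X(F))`. Finally, for any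
ideal `I` the standard monomials map to a basis of `S/I`, so `dim_K S/I = |Δ_≺(I)|`; when they
are infinitely many, both sides are the junk value `0`.
-/

section Footprint

variable (m : MonomialOrder (Fin s)) (I : Ideal (MvPolynomial (Fin s) K))

def stdExponents : Set (Fin s →₀ ℕ) :=
  { a | monomial a (1 : K) ∉ initialIdeal m I }

theorem initialIdeal_eq_span_monomial_image :
    initialIdeal m I =
      Ideal.span ((monomial · (1 : K)) '' { a | ∃ f ∈ I, f ≠ 0 ∧ m.degree f = a }) := by
  unfold initialIdeal leadMon
  congr 1
  ext g
  -- `leadExp m f` unfolds to Mathlib's `m.degree f`.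
  constructor
  · rintro ⟨f, hfI, hf0, rfl⟩
    exact ⟨_, ⟨f, hfI, hf0, rfl⟩, rfl⟩
  · rintro ⟨_, ⟨f, hfI, hf0, rfl⟩, rfl⟩
    exact ⟨f, hfI, hf0, rfl⟩

theorem monomial_mem_initialIdeal_iff {c : Fin s →₀ ℕ} :
    monomial c (1 : K) ∈ initialIdeal m I ↔ ∃ f ∈ I, f ≠ 0 ∧ m.degree f ≤ c := by
  classical
  rw [initialIdeal_eq_span_monomial_image, mem_ideal_span_monomial_image, support_monomial,
    if_neg one_ne_zero]
  simp [and_assoc]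

theorem exists_mem_restrictSupport_stdExponents_sub_mem (f : MvPolynomial (Fin s) K) :
    ∃ r ∈ restrictSupport K (stdExponents m I), f - r ∈ I := by
  obtain ⟨g, r, hf, -, hr⟩ := m.div_set (B := { b | b ∈ I ∧ b ≠ 0 })
    (fun b hb => (m.leadingCoeff_ne_zero_iff.mpr hb.2).isUnit) f
  refine ⟨r, fun c hc hcI => ?_, ?_⟩
  · obtain ⟨b, hbI, hb0, hbc⟩ := (monomial_mem_initialIdeal_iff m I).mp hcI
    exact hr c hc b ⟨hbI, hb0⟩ hbc
  · rw [hf, add_sub_cancel_right, Finsupp.linearCombination_apply]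
    exact I.sum_mem fun b _ => I.mul_mem_left _ b.2.1

theorem eq_zero_of_mem_restrictSupport_stdExponents {r : MvPolynomial (Fin s) K}
    (hr : r ∈ restrictSupport K (stdExponents m I)) (hrI : r ∈ I) : r = 0 := by
  by_contra hr0
  exact hr ((m.degree_mem_support_iff r).mpr hr0)
    ((monomial_mem_initialIdeal_iff m I).mpr ⟨r, hrI, hr0, le_rfl⟩)

/-- Macaulay's theorem. Surjectivity is the division algorithm by the nonzero elements of `I`;
injectivity holds because the leading monomial of a nonzero element of `I` lies in `in_≺(I)`. -/
noncomputable def restrictSupportStdExponentsEquiv :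
    restrictSupport K (stdExponents m I) ≃ₗ[K] MvPolynomial (Fin s) K ⧸ I :=
  LinearEquiv.ofBijective
    ((Ideal.Quotient.mkₐ K I).toLinearMap ∘ₗ (restrictSupport K (stdExponents m I)).subtype)
    ⟨(injective_iff_map_eq_zero _).mpr fun r hr =>
        Subtype.ext (eq_zero_of_mem_restrictSupport_stdExponents m I r.2
          (Ideal.Quotient.eq_zero_iff_mem.mp hr)),
      fun y => by
        obtain ⟨f, rfl⟩ := Ideal.Quotient.mk_surjective y
        obtain ⟨r, hr, hfr⟩ := exists_mem_restrictSupport_stdExponents_sub_mem m I f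
        exact ⟨⟨r, hr⟩, (Ideal.Quotient.eq.mpr hfr).symm⟩⟩

theorem stdMonomials_eq_image_stdExponents :
    stdMonomials m I = (monomial · (1 : K)) '' stdExponents m I := by
  ext g
  constructor
  · rintro ⟨⟨a, rfl⟩, ha⟩
    exact ⟨a, ha, rfl⟩
  · rintro ⟨a, ha, rfl⟩
    exact ⟨⟨a, rfl⟩, ha⟩

theorem finrank_quotient_eq_ncard_stdMonomials :
    Module.finrank K (MvPolynomial (Fin s) K ⧸ I) = (stdMonomials m I).ncard := by
  rw [← (restrictSupportStdExponentsEquiv m I).finrank_eq,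
    Module.finrank_eq_nat_card_basis (basisRestrictSupport K _),
    stdMonomials_eq_image_stdExponents,
    Set.ncard_image_of_injective _ (monomial_left_injective one_ne_zero),
    Nat.card_coe_set_eq]

end Footprint

theorem exists_eval_eq_one_and_eval_eq_zero {σ : Type*} (x : σ → K) (Y : Finset (σ → K))
    (hx : x ∉ Y) : ∃ p : MvPolynomial σ K, eval x p = 1 ∧ ∀ y ∈ Y, eval y p = 0 := by
  classical
  induction Y using Finset.induction_on with
  | empty => exact ⟨1, map_one _, by simp⟩
  | insert y Y _ ih =>
    obtain ⟨p, hpx, hpY⟩ := ih fun h => hx (Finset.mem_insert_of_mem h)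
    obtain ⟨i, hi⟩ := Function.ne_iff.mp fun h : x = y => hx (h ▸ Finset.mem_insert_self y Y)
    refine ⟨p * C (x i - y i)⁻¹ * (X i - C (y i)), ?_, fun z hz => ?_⟩
    · simp [hpx, sub_ne_zero.mpr hi]
    · rcases Finset.mem_insert.mp hz with rfl | hz
      · simp
      · simp [hpY z hz]

section VanishingIdeal

variable (X : Finset (Fin s → K))

theorem evalMap_surjective : Function.Surjective (evalMap X) := by
  classical
  rw [← LinearMap.range_eq_top, eq_top_iff, ← (Pi.basisFun K X).span_eq, Submodule.span_le]
  rintro _ ⟨x, rfl⟩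
  obtain ⟨p, hpx, hpX⟩ :=
    exists_eval_eq_one_and_eval_eq_zero (x : Fin s → K) (X.erase x) (Finset.notMem_erase _ _)
  refine ⟨p, funext fun y => ?_⟩
  by_cases hyx : y = x
  · subst hyx
    simp [evalMap, hpx]
  · simp [evalMap, hyx,
      hpX y (Finset.mem_erase.mpr ⟨Subtype.coe_ne_coe.mpr hyx, y.2⟩)]

theorem ker_evalMap :
    LinearMap.ker (evalMap X) = (affVanishingIdeal (X : Set (Fin s → K))).restrictScalars K := by
  ext f
  exact ⟨fun hf x hx => congrFun hf ⟨x, hx⟩, fun hf => funext fun x => hf x x.2⟩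

theorem sub_mem_affVanishingIdeal_iff {g h : MvPolynomial (Fin s) K} :
    g - h ∈ affVanishingIdeal (X : Set (Fin s → K)) ↔ evalMap X g = evalMap X h := by
  rw [← LinearMap.sub_mem_ker_iff, ker_evalMap]
  rfl

end VanishingIdeal

theorem finrank_quotient_affVanishingIdeal {Y : Set (Fin s → K)} (hY : Y.Finite) :
    Module.finrank K (MvPolynomial (Fin s) K ⧸ affVanishingIdeal Y) = Y.ncard := by
  obtain ⟨X, rfl⟩ := hY.exists_finset_coe
  let e : (MvPolynomial (Fin s) K ⧸ affVanishingIdeal (X : Set (Fin s → K))) ≃ₗ[K] (X → K) :=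
    (Submodule.Quotient.restrictScalarsEquiv K _).symm ≪≫ₗ
      Submodule.quotEquivOfEq _ _ (ker_evalMap X).symm ≪≫ₗ
      (evalMap X).quotKerEquivOfSurjective (evalMap_surjective X)
  rw [e.finrank_eq, Module.finrank_fintype_fun_eq_card, Fintype.card_coe, Set.ncard_coe_finset]

theorem affVanishingIdeal_sup_span_eq (X : Finset (Fin s → K))
    (F : Finset (MvPolynomial (Fin s) K)) :
    affVanishingIdeal (X : Set (Fin s → K)) ⊔ Ideal.span (F : Set (MvPolynomial (Fin s) K)) =
      affVanishingIdeal (VX X F) := by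
  classical
  set J := affVanishingIdeal (X : Set (Fin s → K)) ⊔ Ideal.span (F : Set (MvPolynomial (Fin s) K))
  refine le_antisymm (sup_le (fun g hg x hx => hg x hx.1)
    (Ideal.span_le.mpr fun f hf x hx => hx.2 f hf)) fun g hg => ?_
  choose e he using fun x : X => evalMap_surjective X (Pi.single x 1)
  -- If `f ∈ F` does not vanish at `x`, then `e x ≡ f(x)⁻¹ • (f * e x)` modulo `I(X)`.
  have he_mem : ∀ x : X, (x : Fin s → K) ∉ VX X F → e x ∈ J := by
    intro x hx
    obtain ⟨f, hfF, hfx⟩ : ∃ f ∈ F, eval (x : Fin s → K) f ≠ 0 := by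
      simpa [VX, x.2] using hx
    have hmod : e x - (eval (x : Fin s → K) f)⁻¹ • (f * e x) ∈
        affVanishingIdeal (X : Set (Fin s → K)) := by
      rw [sub_mem_affVanishingIdeal_iff]
      funext y
      have hy := congrFun (he x) y
      simp only [evalMap, LinearMap.coe_mk, AddHom.coe_mk] at hy ⊢
      by_cases hyx : y = x
      · subst hyx
        simp_all
      · simp_all
    have hfe : (eval (x : Fin s → K) f)⁻¹ • (f * e x) ∈ J :=
      J.smul_of_tower_mem _ (J.mul_mem_right _ (Ideal.mem_sup_right (Ideal.subset_span hfF)))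
    simpa using J.add_mem (Ideal.mem_sup_left hmod) hfe
  have hinterp : g - ∑ x : X, eval (x : Fin s → K) g • e x ∈
      affVanishingIdeal (X : Set (Fin s → K)) := by
    rw [sub_mem_affVanishingIdeal_iff, map_sum]
    simp_rw [map_smul, he]
    funext y
    simp [Pi.single_apply, evalMap]
  have hsum : ∑ x : X, eval (x : Fin s → K) g • e x ∈ J := by
    refine J.sum_mem fun x _ => ?_
    by_cases hx : (x : Fin s → K) ∈ VX X F
    · rw [hg x hx, zero_smul]
      exact J.zero_mem
    · exact J.smul_of_tower_mem _ (he_mem x hx)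
  simpa using J.add_mem (Ideal.mem_sup_left hinterp) hsum

/-- Theorem: `|V_X(F)| = deg S/(I(X),F) = dim_K S/(I(X),F) = |Δ_≺(I(X),F)|`. -/
theorem card_variety_eq_degree_eq_dim_eq_footprint (X : Finset (Fin s → K))
    (m : MonomialOrder (Fin s)) (F : Finset (MvPolynomial (Fin s) K)) :
    (VX X F).ncard =
        adeg (affVanishingIdeal (X : Set (Fin s → K)) ⊔
          Ideal.span (F : Set (MvPolynomial (Fin s) K))) ∧
    adeg (affVanishingIdeal (X : Set (Fin s → K)) ⊔
          Ideal.span (F : Set (MvPolynomial (Fin s) K))) =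
      Module.finrank K (MvPolynomial (Fin s) K ⧸
        (affVanishingIdeal (X : Set (Fin s → K)) ⊔
          Ideal.span (F : Set (MvPolynomial (Fin s) K)))) ∧
    Module.finrank K (MvPolynomial (Fin s) K ⧸
        (affVanishingIdeal (X : Set (Fin s → K)) ⊔
          Ideal.span (F : Set (MvPolynomial (Fin s) K)))) =
      (stdMonomials m (affVanishingIdeal (X : Set (Fin s → K)) ⊔
        Ideal.span (F : Set (MvPolynomial (Fin s) K)))).ncard := by
  have hV : (VX X F).Finite := X.finite_toSet.subset fun x hx => hx.1
  refine ⟨?_, rfl, finrank_quotient_eq_ncard_stdMonomials m _⟩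
  rw [adeg, affVanishingIdeal_sup_span_eq, finrank_quotient_affVanishingIdeal hV]
end
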